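/- Let f : [t₀, t] → ℝ and Ψ : [t₀, t] → ℝ integrable. Suppose (i) for all s₀ ≤ s₁ in [t₀,t] we have f(s₁) - f(s₀) ≤ ∫_{s₀}^{s₁} Ψ, and (ii) f(s₁) - f(s₀) = ∫_{s₀}^{s₁} Ψ whenever [s₀, s₁] is contained in an open set G of full measure in [t₀,t] on which f is continuous. Let Φ : ℝ → ℝ be non-decreasing, M-Lipschitz, and absolutely continuous. If additionally Φ(f(s₁)) - Φ(f(s₀)) = ∫_{s₀}^{s₁} Φ'(f(τ))Ψ(τ) dτ for [s₀,s₁] ⊆ G, and there is an integrable h ≥ 0 with ∫_{s₀}^{s₁} Ψ ≤ ∫_{s₀}^{s₁} h for all s₀ ≤ s₁, then Φ(f(t)) - Φ(f(t₀)) ≤ ∫_{t₀}^{t} Φ'(f(τ))Ψ(τ) dτ. -/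

import Mathlib

/-!
Put `D s = Φ (f s) - ∫_{t₀}^s Φ'(f) Ψ` and `ρ = M h + |Φ'(f) Ψ|`. Monotonicity and the Lipschitz
bound turn the one-sided inequality for `f` into `D y - D x ≤ ∫_x^y ρ`, while `D` is constant on
every interval inside `G`. Fix an open `V ⊇ [t₀, t] \ G`. Then `D` minus the primitive of `ρ`
restricted to `V` does not increase just to the right of any point (on `G` because `D` is locally
constant, on `V` because the increment of `D` is paid for), and from the left it is controlled
by the continuous primitive of `ρ`, so a continuous induction gives `D t - D t₀ ≤ ∫_V ρ`. The bad
set is null, so outer regularity and absolute continuity of the integral make `∫_V ρ` as small as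
we like.
-/

open MeasureTheory Set Filter Topology
open scoped ENNReal

theorem le_of_antitoneOn_sub_of_forall_exists_gt_le {α : Type*}
    [ConditionallyCompleteLinearOrder α] [TopologicalSpace α] [OrderTopology α]
    {u w : α → ℝ} {a b : α} (hab : a ≤ b) (hw : ContinuousOn w (Icc a b))
    (hanti : AntitoneOn (fun s => u s - w s) (Icc a b))
    (hstep : ∀ c ∈ Ico a b, ∃ d ∈ Ioc c b, u d ≤ u c) :
    u b ≤ u a := by
  set S := {s ∈ Icc a b | u s ≤ u a}
  have haS : a ∈ S := ⟨left_mem_Icc.2 hab, le_rfl⟩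
  have hSbdd : BddAbove S := ⟨b, fun s hs => hs.1.2⟩
  set c := sSup S
  have hc : c ∈ Icc a b := ⟨le_csSup hSbdd haS, csSup_le ⟨a, haS⟩ fun s hs => hs.1.2⟩
  have hcS : c ∈ S := by
    refine ⟨hc, ?_⟩
    have := mem_closure_iff_nhdsWithin_neBot.1 (csSup_mem_closure ⟨a, haS⟩ hSbdd)
    have hlim : Tendsto (fun s => u a + (w c - w s)) (𝓝[S] c) (𝓝 (u a)) := by
      simpa using (tendsto_const_nhds (x := u a)).add ((tendsto_const_nhds (x := w c)).sub
        ((hw c hc).mono fun s (hs : s ∈ S) => hs.1))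
    refine ge_of_tendsto hlim (eventually_nhdsWithin_of_forall fun s (hs : s ∈ S) => ?_)
    have hcs := hanti hs.1 hc (le_csSup hSbdd hs)
    linarith [hs.2]
  rcases hc.2.eq_or_lt with hcb | hcb
  · exact hcb ▸ hcS.2
  obtain ⟨d, hd, hdc⟩ := hstep c ⟨hc.1, hcb⟩
  have hdS : d ∈ S := ⟨⟨hc.1.trans hd.1.le, hd.2⟩, hdc.trans hcS.2⟩
  exact absurd (le_csSup hSbdd hdS) (not_le.2 hd.1)

theorem nonpos_of_forall_isOpen_superset_le_setIntegral {α : Type*} [TopologicalSpace α]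
    [MeasurableSpace α] [OpensMeasurableSpace α] {μ : Measure α} [μ.OuterRegular]
    {K s : Set α} {ρ : α → ℝ} {x : ℝ} (hK : μ K = 0) (hρ : IntegrableOn ρ s μ)
    (hle : ∀ V, IsOpen V → K ⊆ V → x ≤ ∫ τ in s ∩ V, ρ τ ∂μ) : x ≤ 0 := by
  have hV : ∀ n : ℕ, ∃ V ⊇ K, IsOpen V ∧ μ V < (n : ℝ≥0∞)⁻¹ := fun n =>
    K.exists_isOpen_lt_of_lt _ (by simp [hK])
  choose V hKV hVopen hμV using hV
  have hμ : Tendsto (μ.restrict s ∘ V) atTop (𝓝 0) :=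
    tendsto_of_tendsto_of_tendsto_of_le_of_le tendsto_const_nhds
      ENNReal.tendsto_inv_nat_nhds_zero (fun _ => zero_le)
      fun n => (Measure.restrict_le_self _).trans (hμV n).le
  refine ge_of_tendsto' (hρ.tendsto_setIntegral_nhds_zero hμ) fun n => ?_
  simpa [Measure.restrict_restrict (hVopen n).measurableSet, inter_comm] using
    hle (V n) (hVopen n) (hKV n)

theorem MeasureTheory.IntegrableOn.integral_sub_integral_of_mem_Icc {f : ℝ → ℝ} {a b x y : ℝ}
    (hf : IntegrableOn f (Icc a b)) (hx : x ∈ Icc a b) (hy : y ∈ Icc a b) :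
    (∫ τ in a..y, f τ) - ∫ τ in a..x, f τ = ∫ τ in x..y, f τ := by
  have ha : a ∈ Icc a b := left_mem_Icc.2 (hx.1.trans hx.2)
  exact intervalIntegral.integral_interval_sub_left
    (hf.mono_set (uIcc_subset_Icc ha hy)).intervalIntegrable
    (hf.mono_set (uIcc_subset_Icc ha hx)).intervalIntegrable

theorem IsOpen.exists_Icc_subset {U : Set ℝ} {c b : ℝ} (hU : IsOpen U) (hc : c ∈ U)
    (hcb : c < b) : ∃ d ∈ Ioc c b, Icc c d ⊆ U := by
  obtain ⟨u, hcu, hu⟩ :=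
    mem_nhdsGE_iff_exists_Icc_subset.1 (mem_nhdsWithin_of_mem_nhds (hU.mem_nhds hc))
  exact ⟨min u b, ⟨lt_min hcu hcb, min_le_right _ _⟩,
    (Icc_subset_Icc_right (min_le_left _ _)).trans hu⟩

section LocallyNonincreasing

variable {D ρ : ℝ → ℝ} {G : Set ℝ} {a b : ℝ}

theorem sub_le_integral_indicator_of_locally_le {V : Set ℝ} (hab : a ≤ b) (hG : IsOpen G)
    (hV : IsOpen V) (hGV : Icc a b \ G ⊆ V) (hρ : IntegrableOn ρ (Icc a b))
    (hρ₀ : ∀ᵐ τ ∂volume.restrict (Icc a b), 0 ≤ ρ τ)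
    (hinc : ∀ x y, a ≤ x → x ≤ y → y ≤ b → D y - D x ≤ ∫ τ in x..y, ρ τ)
    (hloc : ∀ x y, a ≤ x → x ≤ y → y ≤ b → Icc x y ⊆ G → D y ≤ D x) :
    D b - D a ≤ ∫ τ in a..b, V.indicator ρ τ := by
  have hρV := hρ.indicator hV.measurableSet
  have hV₀ : ∀ {x y}, a ≤ x → x ≤ y → y ≤ b → 0 ≤ ∫ τ in x..y, V.indicator ρ τ :=
    fun hx hxy hy => intervalIntegral.integral_nonneg_of_ae_restrict hxy <|
      (ae_restrict_of_ae_restrict_of_subset (Icc_subset_Icc hx hy) hρ₀).mono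
        fun τ hτ => indicator_nonneg (fun _ _ => hτ) τ
  have hw := intervalIntegral.continuousOn_primitive_interval
    (hρ.mono_set (uIcc_subset_Icc (left_mem_Icc.2 hab) (right_mem_Icc.2 hab)))
  rw [uIcc_of_le hab] at hw
  suffices D b - ∫ τ in a..b, V.indicator ρ τ ≤ D a - ∫ τ in a..a, V.indicator ρ τ by
    simp only [intervalIntegral.integral_same, sub_zero] at this
    linarith
  refine le_of_antitoneOn_sub_of_forall_exists_gt_le
    (u := fun s => D s - ∫ τ in a..s, V.indicator ρ τ) hab hw ?_ fun c hc => ?_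
  · intro x hx y hy hxy
    have hDxy := hinc x y hx.1 hxy hy.2
    have hρxy := hρ.integral_sub_integral_of_mem_Icc hx hy
    have hρVxy := hρV.integral_sub_integral_of_mem_Icc hx hy
    have hρVxy₀ := hV₀ hx.1 hxy hy.2
    linarith
  have hcI : c ∈ Icc a b := Ico_subset_Icc_self hc
  by_cases hcG : c ∈ G
  · obtain ⟨d, hd, hcdG⟩ := hG.exists_Icc_subset hcG hc.2
    have hDcd := hloc c d hc.1 hd.1.le hd.2 hcdG
    have hρVcd := hρV.integral_sub_integral_of_mem_Icc hcI ⟨hc.1.trans hd.1.le, hd.2⟩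
    have hρVcd₀ := hV₀ hc.1 hd.1.le hd.2
    exact ⟨d, hd, by linarith⟩
  · obtain ⟨d, hd, hcdV⟩ := hV.exists_Icc_subset (hGV ⟨hcI, hcG⟩) hc.2
    have hDcd := hinc c d hc.1 hd.1.le hd.2
    have hρVcd := hρV.integral_sub_integral_of_mem_Icc hcI ⟨hc.1.trans hd.1.le, hd.2⟩
    have hρV_eq : ∫ τ in c..d, V.indicator ρ τ = ∫ τ in c..d, ρ τ :=
      intervalIntegral.integral_congr fun τ hτ =>
        indicator_of_mem (hcdV (uIcc_of_le hd.1.le ▸ hτ)) ρ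
    exact ⟨d, hd, by linarith⟩

theorem le_of_locally_le_of_sub_le_integral (hab : a ≤ b) (hG : IsOpen G)
    (hGfull : volume (Icc a b \ G) = 0) (hρ : IntegrableOn ρ (Icc a b))
    (hρ₀ : ∀ᵐ τ ∂volume.restrict (Icc a b), 0 ≤ ρ τ)
    (hinc : ∀ x y, a ≤ x → x ≤ y → y ≤ b → D y - D x ≤ ∫ τ in x..y, ρ τ)
    (hloc : ∀ x y, a ≤ x → x ≤ y → y ≤ b → Icc x y ⊆ G → D y ≤ D x) :
    D b ≤ D a := by
  suffices D b - D a ≤ 0 by linarith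
  refine nonpos_of_forall_isOpen_superset_le_setIntegral hGfull
    (hρ.mono_set Ioc_subset_Icc_self) fun V hV hGV => ?_
  rw [← setIntegral_indicator hV.measurableSet, ← intervalIntegral.integral_of_le hab]
  exact sub_le_integral_indicator_of_locally_le hab hG hV hGV hρ hρ₀ hinc hloc

end LocallyNonincreasing

theorem sub_le_integral_of_forall_Icc_subset_eq {F g k : ℝ → ℝ} {G : Set ℝ} {a b : ℝ}
    (hab : a ≤ b) (hG : IsOpen G) (hGfull : volume (Icc a b \ G) = 0)
    (hg : IntegrableOn g (Icc a b)) (hk : IntegrableOn k (Icc a b))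
    (hk₀ : ∀ᵐ τ ∂volume.restrict (Icc a b), 0 ≤ k τ)
    (hinc : ∀ x y, a ≤ x → x ≤ y → y ≤ b → F y - F x ≤ ∫ τ in x..y, k τ)
    (heq : ∀ x y, a ≤ x → x ≤ y → y ≤ b → Icc x y ⊆ G → F y - F x = ∫ τ in x..y, g τ) :
    F b - F a ≤ ∫ τ in a..b, g τ := by
  have key := le_of_locally_le_of_sub_le_integral (D := fun s => F s - ∫ τ in a..s, g τ)
    (ρ := fun τ => k τ + |g τ|) hab hG hGfull (hk.add hg.abs)
    (hk₀.mono fun τ hτ => add_nonneg hτ (abs_nonneg _)) ?_ ?_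
  · simp only [intervalIntegral.integral_same, sub_zero] at key
    linarith
  · intro x y hx hxy hy
    have hxyI : uIcc x y ⊆ Icc a b := uIcc_subset_Icc ⟨hx, hxy.trans hy⟩ ⟨hx.trans hxy, hy⟩
    rw [intervalIntegral.integral_add (hk.mono_set hxyI).intervalIntegrable
      (IntegrableOn.mono_set hg.abs hxyI).intervalIntegrable]
    have hFxy := hinc x y hx hxy hy
    have hgxy := hg.integral_sub_integral_of_mem_Icc ⟨hx, hxy.trans hy⟩ ⟨hx.trans hxy, hy⟩
    have hg_abs : -∫ τ in x..y, g τ ≤ ∫ τ in x..y, |g τ| :=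
      (neg_le_abs _).trans (intervalIntegral.abs_integral_le_integral_abs hxy)
    linarith
  · intro x y hx hxy hy hxyG
    have hFxy := heq x y hx hxy hy hxyG
    have hgxy := hg.integral_sub_integral_of_mem_Icc ⟨hx, hxy.trans hy⟩ ⟨hx.trans hxy, hy⟩
    linarith

theorem Monotone.sub_le_mul_of_sub_le {Φ : ℝ → ℝ} {M x y c : ℝ} (hΦ : Monotone Φ)
    (hlip : ∀ u v, |Φ u - Φ v| ≤ M * |u - v|) (hM : 0 ≤ M) (hyx : y - x ≤ c) (hc : 0 ≤ c) :
    Φ y - Φ x ≤ M * c := by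
  rcases le_total y x with hxy | hxy
  · linarith [hΦ hxy, mul_nonneg hM hc]
  · calc Φ y - Φ x ≤ M * |y - x| := (le_abs_self _).trans (hlip y x)
      _ = M * (y - x) := by rw [abs_of_nonneg (sub_nonneg.2 hxy)]
      _ ≤ M * c := mul_le_mul_of_nonneg_left hyx hM

theorem stmt_4_general (t₀ t M : ℝ) (ht : t₀ < t)
    (f Ψ h : ℝ → ℝ) (G : Set ℝ)
    (hGopen : IsOpen G)
    (hGfull : volume (Set.Icc t₀ t \ G) = 0)
    (hhint : IntegrableOn h (Set.Icc t₀ t))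
    (hhpos : ∀ᵐ τ ∂(volume.restrict (Set.Icc t₀ t)), 0 ≤ h τ)
    (hineq : ∀ s₀ s₁ : ℝ, t₀ ≤ s₀ → s₀ ≤ s₁ → s₁ ≤ t →
      f s₁ - f s₀ ≤ ∫ τ in s₀..s₁, Ψ τ)
    (Φ Φ' : ℝ → ℝ) (hM : 0 ≤ M)
    (hmono : Monotone Φ)
    (hlip : ∀ x y : ℝ, |Φ x - Φ y| ≤ M * |x - y|)
    (hΦeq : ∀ s₀ s₁ : ℝ, s₀ ≤ s₁ → Set.Icc s₀ s₁ ⊆ G →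
      Φ (f s₁) - Φ (f s₀) = ∫ τ in s₀..s₁, Φ' (f τ) * Ψ τ)
    (hprodint : IntegrableOn (fun τ => Φ' (f τ) * Ψ τ) (Set.Icc t₀ t))
    (hdom : ∀ s₀ s₁ : ℝ, t₀ ≤ s₀ → s₀ ≤ s₁ → s₁ ≤ t →
      (∫ τ in s₀..s₁, Ψ τ) ≤ ∫ τ in s₀..s₁, h τ) :
    Φ (f t) - Φ (f t₀) ≤ ∫ τ in t₀..t, Φ' (f τ) * Ψ τ := by
  refine sub_le_integral_of_forall_Icc_subset_eq (F := fun s => Φ (f s)) ht.le hGopen hGfull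
    hprodint (hhint.const_mul M) (hhpos.mono fun τ hτ => mul_nonneg hM hτ)
    (fun x y hx hxy hy => ?_) fun x y _ hxy _ => hΦeq x y hxy
  have hh₀ : 0 ≤ ∫ τ in x..y, h τ := intervalIntegral.integral_nonneg_of_ae_restrict hxy
    (ae_restrict_of_ae_restrict_of_subset (Icc_subset_Icc hx hy) hhpos)
  rw [intervalIntegral.integral_const_mul]
  exact hmono.sub_le_mul_of_sub_le hlip hM ((hineq x y hx hxy hy).trans (hdom x y hx hxy hy)) hh₀

theorem stmt_4 (t₀ t M : ℝ) (ht : t₀ < t)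
    (f Ψ h : ℝ → ℝ) (G : Set ℝ)
    (hGopen : IsOpen G) (hGsub : G ⊆ Set.Icc t₀ t)
    (hGfull : volume (Set.Icc t₀ t \ G) = 0)
    (hΨint : IntegrableOn Ψ (Set.Icc t₀ t))
    (hhint : IntegrableOn h (Set.Icc t₀ t))
    (hhpos : ∀ᵐ τ ∂(volume.restrict (Set.Icc t₀ t)), 0 ≤ h τ)
    (hineq : ∀ s₀ s₁ : ℝ, t₀ ≤ s₀ → s₀ ≤ s₁ → s₁ ≤ t →
      f s₁ - f s₀ ≤ ∫ τ in s₀..s₁, Ψ τ)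
    (hfcont : ContinuousOn f G)
    (heq : ∀ s₀ s₁ : ℝ, s₀ ≤ s₁ → Set.Icc s₀ s₁ ⊆ G →
      f s₁ - f s₀ = ∫ τ in s₀..s₁, Ψ τ)
    (Φ Φ' : ℝ → ℝ) (hM : 0 ≤ M)
    (hmono : Monotone Φ)
    (hlip : ∀ x y : ℝ, |Φ x - Φ y| ≤ M * |x - y|)
    (hac : ∀ x y : ℝ, x ≤ y → Φ y - Φ x = ∫ s in x..y, Φ' s)
    (hΦeq : ∀ s₀ s₁ : ℝ, s₀ ≤ s₁ → Set.Icc s₀ s₁ ⊆ G →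
      Φ (f s₁) - Φ (f s₀) = ∫ τ in s₀..s₁, Φ' (f τ) * Ψ τ)
    (hprodint : IntegrableOn (fun τ => Φ' (f τ) * Ψ τ) (Set.Icc t₀ t))
    (hdom : ∀ s₀ s₁ : ℝ, t₀ ≤ s₀ → s₀ ≤ s₁ → s₁ ≤ t →
      (∫ τ in s₀..s₁, Ψ τ) ≤ ∫ τ in s₀..s₁, h τ) :
    Φ (f t) - Φ (f t₀) ≤ ∫ τ in t₀..t, Φ' (f τ) * Ψ τ :=
  stmt_4_general t₀ t M ht f Ψ h G hGopen hGfull hhint hhpos hineq Φ Φ' hM hmono hlip hΦeq hprodint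
    hdom
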